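/- arXiv:2403.18487 — 2 statements merged into one kernel-verified Lean document; each statement's English description precedes it below -/
import Mathlib

section
/- The Hausdorff dimension of the Sierpinski carpet is log 8 / log 3. -/
/-- The 8 translation offsets of the Sierpinski-carpet IFS: `{0, 1/3, 2/3}²` minus the
center `(1/3, 1/3)`. -/
def carpetOffsets : Set (ℝ × ℝ) :=
  {p | p.1 ∈ ({0, 1/3, 2/3} : Set ℝ) ∧ p.2 ∈ ({0, 1/3, 2/3} : Set ℝ)} \ {(1/3, 1/3)}


open MeasureTheory Filter Set

noncomputable section

/-- digit-pair table for the 8 carpet offsets -/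
def scE (i : ℤ) : ℤ × ℤ :=
  if i = 0 then (0,0) else if i = 1 then (0,1) else if i = 2 then (0,2)
  else if i = 3 then (1,0) else if i = 4 then (1,2) else if i = 5 then (2,0)
  else if i = 6 then (2,1) else (2,2)

lemma scE_bounds (i : ℤ) : (scE i).1 ∈ Set.Icc (0:ℤ) 2 ∧ (scE i).2 ∈ Set.Icc (0:ℤ) 2 := by
  unfold scE
  split_ifs <;> simp

lemma scE_inj {i j : ℤ} (hi0 : 0 ≤ i) (hi8 : i < 8) (hj0 : 0 ≤ j) (hj8 : j < 8)
    (h : scE i = scE j) : i = j := by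
  interval_cases i <;> interval_cases j <;> simp_all [scE, Prod.ext_iff]

lemma scE_offset {i : ℤ} (hi0 : 0 ≤ i) (hi8 : i < 8) :
    ((((scE i).1 : ℝ))/3, (((scE i).2 : ℝ))/3) ∈ carpetOffsets := by
  interval_cases i <;>
    refine ⟨⟨?_, ?_⟩, ?_⟩ <;> norm_num [scE, Prod.ext_iff]

lemma carpetOffsets_eq_range :
    carpetOffsets = Set.range (fun i : Fin 8 => ((((scE i).1 : ℝ))/3, (((scE i).2 : ℝ))/3)) := by
  ext p
  constructor
  · rintro ⟨⟨h1, h2⟩, h3⟩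
    simp only [Set.mem_insert_iff, Set.mem_singleton_iff] at h1 h2
    simp only [Set.mem_singleton_iff, Prod.ext_iff, not_and] at h3
    have hp : p = (p.1, p.2) := rfl
    rcases h1 with h1 | h1 | h1 <;> rcases h2 with h2 | h2 | h2
    · exact ⟨⟨0, by norm_num⟩, by rw [hp, h1, h2]; norm_num [scE]⟩
    · exact ⟨⟨1, by norm_num⟩, by rw [hp, h1, h2]; norm_num [scE]⟩
    · exact ⟨⟨2, by norm_num⟩, by rw [hp, h1, h2]; norm_num [scE]⟩
    · exact ⟨⟨3, by norm_num⟩, by rw [hp, h1, h2]; norm_num [scE]⟩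
    · exact absurd h2 (by intro h2; exact h3 h1 h2)
    · exact ⟨⟨4, by norm_num⟩, by rw [hp, h1, h2]; norm_num [scE]⟩
    · exact ⟨⟨5, by norm_num⟩, by rw [hp, h1, h2]; norm_num [scE]⟩
    · exact ⟨⟨6, by norm_num⟩, by rw [hp, h1, h2]; norm_num [scE]⟩
    · exact ⟨⟨7, by norm_num⟩, by rw [hp, h1, h2]; norm_num [scE]⟩
  · rintro ⟨i, rfl⟩
    have : (0:ℤ) ≤ (i:ℤ) := by positivity
    have h8 : ((i:ℤ)) < 8 := by exact_mod_cast i.2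
    exact scE_offset this h8

/-- `k`-th base-8 digit of `x`. -/
def scDig (k : ℕ) (x : ℝ) : ℤ := ⌊(8:ℝ)^(k+1) * x⌋ - 8 * ⌊(8:ℝ)^k * x⌋

lemma scDig_mem (k : ℕ) (x : ℝ) : scDig k x ∈ Set.Icc (0:ℤ) 7 := by
  have h8 : (8:ℝ)^(k+1) * x = 8 * ((8:ℝ)^k * x) := by ring
  have h1 : 8 * ⌊(8:ℝ)^k * x⌋ ≤ ⌊(8:ℝ)^(k+1) * x⌋ := by
    rw [h8]
    refine Int.le_floor.2 ?_
    push_cast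
    have := Int.floor_le ((8:ℝ)^k * x)
    nlinarith
  have h2 : ⌊(8:ℝ)^(k+1) * x⌋ < 8 * ⌊(8:ℝ)^k * x⌋ + 8 := by
    rw [h8]
    refine Int.floor_lt.2 ?_
    push_cast
    have := Int.lt_floor_add_one ((8:ℝ)^k * x)
    nlinarith
  simp only [scDig, Set.mem_Icc]
  omega

section B
open MeasureTheory Filter Set

/-- generic summability for digit series -/
lemma scSummable {a : ℕ → ℝ} (h : ∀ k, a k ∈ Set.Icc (0:ℝ) 2) :
    Summable (fun k => a k / 3^(k+1)) := by
  refine Summable.of_nonneg_of_le (fun k => by have := (h k).1; positivity) (fun k => ?_)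
    (summable_geometric_of_lt_one (by norm_num : (0:ℝ) ≤ 1/3) (by norm_num))
  have h1 := (h k).1
  have h2 := (h k).2
  rw [div_le_iff₀ (by positivity)]
  have : ((1:ℝ)/3)^k * 3^(k+1) = 3 := by
    rw [div_pow, pow_succ]
    field_simp
    exact one_pow k
  rw [this]
  linarith

/-- tail bound for digit series -/
lemma scTail_bounds {a : ℕ → ℝ} (h : ∀ k, a k ∈ Set.Icc (0:ℝ) 2) (n : ℕ) :
    0 ≤ ∑' k, a (k+n) / 3^((k+n)+1) ∧ ∑' k, a (k+n) / 3^((k+n)+1) ≤ (1/3)^n := by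
  have hs : Summable (fun k => a (k+n) / 3^((k+n)+1)) :=
    (scSummable h).comp_injective (add_left_injective n)
  constructor
  · exact tsum_nonneg fun k => by have := (h (k+n)).1; positivity
  · have hb : ∀ k, a (k+n) / 3^((k+n)+1) ≤ (2/3^(n+1)) * (1/3)^k := by
      intro k
      have h2 := (h (k+n)).2
      rw [div_le_iff₀ (by positivity), div_pow, one_pow]
      rw [div_mul_eq_mul_div, div_mul_eq_mul_div, le_div_iff₀ (by positivity)]
      have h3 : (3:ℝ)^((k+n)+1) = 3^(n+1) * 3^k := by ring
      rw [h3]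
      have p1 : (0:ℝ) < 3^k := by positivity
      have p2 : (0:ℝ) < 3^(n+1) := by positivity
      have h0 := (h (k+n)).1
      calc a (k+n) * 3^(n+1) ≤ 2 * 3^(n+1) := by nlinarith
        _ = 2 * (1/3^k) * (3^(n+1) * 3^k) := by field_simp

    calc ∑' k, a (k+n) / 3^((k+n)+1) ≤ ∑' k : ℕ, (2/3^(n+1)) * (1/3)^k := by
          refine hs.tsum_le_tsum hb ?_
          exact (summable_geometric_of_lt_one (by norm_num) (by norm_num)).mul_left _
      _ = (2/3^(n+1)) * (3/2) := by
          rw [tsum_mul_left, tsum_geometric_of_lt_one (by norm_num) (by norm_num)]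
          norm_num
      _ ≤ (1/3)^n := by
          rw [div_pow, one_pow, pow_succ]
          rw [div_mul_eq_mul_div, div_le_div_iff₀ (by positivity) (by positivity)]
          ring_nf
          nlinarith [pow_pos (show (0:ℝ) < 3 by norm_num) n]

/-- first coordinate digit value, as a real -/
def scA1 (k : ℕ) (x : ℝ) : ℝ := ((scE (scDig k x)).1 : ℝ)
def scA2 (k : ℕ) (x : ℝ) : ℝ := ((scE (scDig k x)).2 : ℝ)

lemma scA1_mem (k : ℕ) (x : ℝ) : scA1 k x ∈ Set.Icc (0:ℝ) 2 := by
  have h := (scE_bounds (scDig k x)).1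
  simp only [Set.mem_Icc] at h ⊢
  unfold scA1
  exact ⟨by exact_mod_cast h.1, by exact_mod_cast h.2⟩

lemma scA2_mem (k : ℕ) (x : ℝ) : scA2 k x ∈ Set.Icc (0:ℝ) 2 := by
  have h := (scE_bounds (scDig k x)).2
  simp only [Set.mem_Icc] at h ⊢
  unfold scA2
  exact ⟨by exact_mod_cast h.1, by exact_mod_cast h.2⟩

/-- the coding map into the carpet -/
def scG (x : ℝ) : ℝ × ℝ := (∑' k, scA1 k x / 3^(k+1), ∑' k, scA2 k x / 3^(k+1))

lemma scDig_measurable (k : ℕ) : Measurable (scDig k) := by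
  have h1 : Measurable fun x : ℝ => ⌊(8:ℝ)^(k+1) * x⌋ :=
    Int.measurable_floor.comp (measurable_const.mul measurable_id)
  have h2 : Measurable fun x : ℝ => ⌊(8:ℝ)^k * x⌋ :=
    Int.measurable_floor.comp (measurable_const.mul measurable_id)
  exact h1.sub (h2.const_mul 8)

lemma scG_measurable : Measurable scG := by
  have key : ∀ (f : ℤ → ℝ), (∀ i, f i ∈ Set.Icc (0:ℝ) 2) →
      Measurable fun x => ∑' k, (f (scDig k x)) / 3^(k+1) := by
    intro f hf
    have hm : ∀ n : ℕ, Measurable fun x => ∑ k ∈ Finset.range n, (f (scDig k x)) / 3^(k+1) := by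
      intro n
      refine Finset.measurable_sum _ fun k _ => ?_
      exact ((measurable_of_countable f).comp (scDig_measurable k)).div measurable_const
    refine measurable_of_tendsto_metrizable hm (tendsto_pi_nhds.2 fun x => ?_)
    exact (scSummable (fun k => hf (scDig k x))).hasSum.tendsto_sum_nat
  have h1 : ∀ i : ℤ, ((scE i).1 : ℝ) ∈ Set.Icc (0:ℝ) 2 := fun i => by
    have h := (scE_bounds i).1
    simp only [Set.mem_Icc] at h ⊢
    exact ⟨by exact_mod_cast h.1, by exact_mod_cast h.2⟩
  have h2 : ∀ i : ℤ, ((scE i).2 : ℝ) ∈ Set.Icc (0:ℝ) 2 := fun i => by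
    have h := (scE_bounds i).2
    simp only [Set.mem_Icc] at h ⊢
    exact ⟨by exact_mod_cast h.1, by exact_mod_cast h.2⟩
  exact ((key (fun i => ((scE i).1 : ℝ)) h1).prodMk (key (fun i => ((scE i).2 : ℝ)) h2))

end B

section C
open MeasureTheory Filter Set Finset Topology

lemma scTelescope {x : ℝ} (hx : x ∈ Set.Ico (0:ℝ) 1) (n : ℕ) :
    ∑ k ∈ Finset.range n, scDig k x * 8^(n-1-k) = ⌊(8:ℝ)^n * x⌋ := by
  induction n with
  | zero =>
    simp only [Finset.range_zero, Finset.sum_empty, pow_zero, one_mul]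
    exact (Int.floor_eq_zero_iff.2 hx).symm
  | succ n ih =>
    rw [Finset.sum_range_succ]
    have hterm : ∀ k ∈ Finset.range n, scDig k x * 8^(n+1-1-k) = 8 * (scDig k x * 8^(n-1-k)) := by
      intro k hk
      simp only [Finset.mem_range] at hk
      have : n+1-1-k = (n-1-k)+1 := by omega
      rw [this, pow_succ]
      ring
    rw [Finset.sum_congr rfl hterm, ← Finset.mul_sum, ih]
    simp only [scDig]
    have : n+1-1-n = 0 := by omega
    rw [this]
    ring

lemma scInterval {x : ℝ} (hx : x ∈ Set.Ico (0:ℝ) 1) (n : ℕ) :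
    (∑ k ∈ Finset.range n, (scDig k x : ℝ)/8^(k+1)) ≤ x ∧
      x < (∑ k ∈ Finset.range n, (scDig k x : ℝ)/8^(k+1)) + (1/8)^n := by
  have h8 : (0:ℝ) < 8^n := by positivity
  have hsum : (∑ k ∈ Finset.range n, (scDig k x : ℝ)/8^(k+1)) = (⌊(8:ℝ)^n * x⌋ : ℝ)/8^n := by
    rw [← scTelescope hx n]
    push_cast
    rw [Finset.sum_div]
    refine Finset.sum_congr rfl fun k hk => ?_
    simp only [Finset.mem_range] at hk
    have he : (8:ℝ)^(n-1-k) * 8^(k+1) = 8^n := by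
      rw [← pow_add]
      congr 1
      omega
    rw [div_eq_div_iff (by positivity) (by positivity)]
    rw [mul_comm ((scDig k x : ℝ)) _, mul_assoc, ← he]
    ring
  rw [hsum]
  have h1 := Int.floor_le ((8:ℝ)^n * x)
  have h2 := Int.lt_floor_add_one ((8:ℝ)^n * x)
  constructor
  · rw [div_le_iff₀ h8]
    linarith
  · rw [div_pow, one_pow, ← add_div, lt_div_iff₀ h8]
    linarith

lemma base3_unique : ∀ (n : ℕ) (a b : ℕ → ℤ), (∀ k, 0 ≤ a k ∧ a k < 3) →
    (∀ k, 0 ≤ b k ∧ b k < 3) →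
    ∑ k ∈ Finset.range n, a k * 3^k = ∑ k ∈ Finset.range n, b k * 3^k →
    ∀ k < n, a k = b k := by
  intro n
  induction n with
  | zero => intro a b _ _ _ k hk; omega
  | succ n ih =>
    intro a b ha hb heq k hk
    rw [Finset.sum_range_succ', Finset.sum_range_succ'] at heq
    have hca : ∀ j ∈ Finset.range n, a (j+1) * 3^(j+1) = 3 * (a (j+1) * 3^j) := by
      intro j _; rw [pow_succ]; ring
    have hcb : ∀ j ∈ Finset.range n, b (j+1) * 3^(j+1) = 3 * (b (j+1) * 3^j) := by
      intro j _; rw [pow_succ]; ring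
    rw [Finset.sum_congr rfl hca, Finset.sum_congr rfl hcb, ← Finset.mul_sum,
      ← Finset.mul_sum] at heq
    simp only [pow_zero, mul_one] at heq
    have h0 := ha 0; have h0' := hb 0
    have hAB : (∑ j ∈ Finset.range n, a (j+1) * 3^j) = ∑ j ∈ Finset.range n, b (j+1) * 3^j ∧
        a 0 = b 0 := by constructor <;> omega
    rcases Nat.eq_zero_or_pos k with rfl | hkpos
    · exact hAB.2
    · obtain ⟨k', rfl⟩ : ∃ k', k = k' + 1 := ⟨k - 1, by omega⟩
      exact ih (fun j => a (j+1)) (fun j => b (j+1)) (fun j => ha (j+1)) (fun j => hb (j+1))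
        hAB.1 k' (by omega)

/-- any series point with offsets in `carpetOffsets` lies in the attractor `K` -/
lemma scMemAttractor {K : Set (ℝ × ℝ)} (hne : K.Nonempty) (hK : IsCompact K)
    (hself : K = ⋃ v ∈ carpetOffsets, (fun x : ℝ × ℝ => (3 : ℝ)⁻¹ • x + v) '' K)
    (v : ℕ → ℝ × ℝ) (hv : ∀ k, v k ∈ carpetOffsets) {p : ℝ × ℝ}
    (hp : HasSum (fun k => ((3:ℝ)⁻¹)^k • v k) p) : p ∈ K := by
  obtain ⟨x₀, hx₀⟩ := hne
  have step : ∀ (n : ℕ) (v : ℕ → ℝ × ℝ), (∀ k, v k ∈ carpetOffsets) → ∀ x ∈ K,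
      (∑ k ∈ Finset.range n, ((3:ℝ)⁻¹)^k • v k) + ((3:ℝ)⁻¹)^n • x ∈ K := by
    intro n
    induction n with
    | zero => intro v _ x hx; simpa using hx
    | succ n ih =>
      intro v hv x hx
      have hy := ih (fun k => v (k+1)) (fun k => hv (k+1)) x hx
      rw [hself]
      rw [Set.mem_iUnion₂]
      refine ⟨v 0, hv 0, ⟨_, hy, ?_⟩⟩
      simp only
      rw [Finset.sum_range_succ']
      simp only [pow_zero, one_smul, smul_add, Finset.smul_sum, smul_smul]
      rw [add_assoc, add_comm _ (v 0), ← add_assoc]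
      congr 1
      congr 1
      · refine Finset.sum_congr rfl fun k _ => ?_
        rw [pow_succ]
        congr 1
        ring
      · rw [pow_succ]
        congr 1
        ring
  have htend : Tendsto (fun n => (∑ k ∈ Finset.range n, ((3:ℝ)⁻¹)^k • v k)
      + ((3:ℝ)⁻¹)^n • x₀) atTop (𝓝 (p + (0:ℝ×ℝ))) := by
    refine hp.tendsto_sum_nat.add ?_
    have h0 : Tendsto (fun n : ℕ => ((3:ℝ)⁻¹)^n) atTop (𝓝 0) :=
      tendsto_pow_atTop_nhds_zero_of_lt_one (by norm_num) (by norm_num)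
    have := h0.smul_const x₀
    simpa using this
  rw [add_zero] at htend
  exact hK.isClosed.mem_of_tendsto htend (Filter.Eventually.of_forall fun n => step n v hv x₀ hx₀)

end C

section D
open MeasureTheory Filter Set Finset Topology

/-- extend a finite word by zeros -/
def scExt (n : ℕ) (w : Fin n → ℤ) : ℕ → ℤ := fun j => if h : j < n then w ⟨j, h⟩ else 0

def scB1 (n : ℕ) (w : Fin n → ℤ) : ℝ := ∑ k ∈ Finset.range n, ((scE (scExt n w k)).1 : ℝ)/3^(k+1)
def scB2 (n : ℕ) (w : Fin n → ℤ) : ℝ := ∑ k ∈ Finset.range n, ((scE (scExt n w k)).2 : ℝ)/3^(k+1)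

/-- level-`n` cell of a word -/
def scCell (n : ℕ) (w : Fin n → ℤ) : Set (ℝ × ℝ) :=
  {p | (scB1 n w ≤ p.1 ∧ p.1 ≤ scB1 n w + (1/3)^n) ∧
       (scB2 n w ≤ p.2 ∧ p.2 ≤ scB2 n w + (1/3)^n)}

/-- base-8 interval of a word -/
def scI (n : ℕ) (w : Fin n → ℤ) : Set ℝ :=
  Set.Ico (∑ k ∈ Finset.range n, (scExt n w k : ℝ)/8^(k+1))
    ((∑ k ∈ Finset.range n, (scExt n w k : ℝ)/8^(k+1)) + (1/8)^n)

def scWord (n : ℕ) (x : ℝ) : Fin n → ℤ := fun k => scDig k x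

lemma scExt_word (n : ℕ) (x : ℝ) {k : ℕ} (hk : k < n) : scExt n (scWord n x) k = scDig k x := by
  simp [scExt, hk, scWord]

lemma scG_mem_cell (n : ℕ) (x : ℝ) : scG x ∈ scCell n (scWord n x) := by
  have hB1 : scB1 n (scWord n x) = ∑ k ∈ Finset.range n, scA1 k x / 3^(k+1) := by
    refine Finset.sum_congr rfl fun k hk => ?_
    rw [scExt_word n x (Finset.mem_range.1 hk)]
    rfl
  have hB2 : scB2 n (scWord n x) = ∑ k ∈ Finset.range n, scA2 k x / 3^(k+1) := by
    refine Finset.sum_congr rfl fun k hk => ?_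
    rw [scExt_word n x (Finset.mem_range.1 hk)]
    rfl
  have hs1 : Summable (fun k => scA1 k x / 3^(k+1)) := scSummable (fun k => scA1_mem k x)
  have hs2 : Summable (fun k => scA2 k x / 3^(k+1)) := scSummable (fun k => scA2_mem k x)
  have hsplit1 := Summable.sum_add_tsum_nat_add (f := fun k => scA1 k x / 3^(k+1)) n hs1
  have hsplit2 := Summable.sum_add_tsum_nat_add (f := fun k => scA2 k x / 3^(k+1)) n hs2
  have ht1 := scTail_bounds (a := fun k => scA1 k x) (fun k => scA1_mem k x) n
  have ht2 := scTail_bounds (a := fun k => scA2 k x) (fun k => scA2_mem k x) n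
  constructor
  · constructor
    · rw [hB1]; show _ ≤ ∑' k, scA1 k x / 3^(k+1); rw [← hsplit1]; linarith [ht1.1]
    · rw [hB1]; show (∑' k, scA1 k x / 3^(k+1)) ≤ _; rw [← hsplit1]; linarith [ht1.2]
  · constructor
    · rw [hB2]; show _ ≤ ∑' k, scA2 k x / 3^(k+1); rw [← hsplit2]; linarith [ht2.1]
    · rw [hB2]; show (∑' k, scA2 k x / 3^(k+1)) ≤ _; rw [← hsplit2]; linarith [ht2.2]

lemma scMem_I {x : ℝ} (hx : x ∈ Set.Ico (0:ℝ) 1) (n : ℕ) : x ∈ scI n (scWord n x) := by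
  have h := scInterval hx n
  have hsum : (∑ k ∈ Finset.range n, (scExt n (scWord n x) k : ℝ)/8^(k+1))
      = ∑ k ∈ Finset.range n, (scDig k x : ℝ)/8^(k+1) := by
    refine Finset.sum_congr rfl fun k hk => ?_
    rw [scExt_word n x (Finset.mem_range.1 hk)]
  exact ⟨by rw [hsum]; exact h.1, by rw [hsum]; exact h.2⟩

def scN1 (n : ℕ) (w : Fin n → ℤ) : ℤ := ∑ k ∈ Finset.range n, (scE (scExt n w k)).1 * 3^(n-1-k)
def scN2 (n : ℕ) (w : Fin n → ℤ) : ℤ := ∑ k ∈ Finset.range n, (scE (scExt n w k)).2 * 3^(n-1-k)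

lemma scN1_cast (n : ℕ) (w : Fin n → ℤ) : (scN1 n w : ℝ) = 3^n * scB1 n w := by
  unfold scN1 scB1
  push_cast
  rw [Finset.mul_sum]
  refine Finset.sum_congr rfl fun k hk => ?_
  have hk' := Finset.mem_range.1 hk
  have he : (3:ℝ)^(n-1-k) * 3^(k+1) = 3^n := by
    rw [← pow_add]; congr 1; omega
  field_simp
  rw [← he]
  ring

lemma scN2_cast (n : ℕ) (w : Fin n → ℤ) : (scN2 n w : ℝ) = 3^n * scB2 n w := by
  unfold scN2 scB2
  push_cast
  rw [Finset.mul_sum]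
  refine Finset.sum_congr rfl fun k hk => ?_
  have hk' := Finset.mem_range.1 hk
  have he : (3:ℝ)^(n-1-k) * 3^(k+1) = 3^n := by
    rw [← pow_add]; congr 1; omega
  field_simp
  rw [← he]
  ring

lemma scN_inj {n : ℕ} {w₁ w₂ : Fin n → ℤ}
    (h₁ : ∀ k, w₁ k ∈ Finset.Icc (0:ℤ) 7) (h₂ : ∀ k, w₂ k ∈ Finset.Icc (0:ℤ) 7)
    (hN1 : scN1 n w₁ = scN1 n w₂) (hN2 : scN2 n w₁ = scN2 n w₂) : w₁ = w₂ := by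
  have key : ∀ (w : Fin n → ℤ) (e : ℤ × ℤ → ℤ),
      (∑ k ∈ Finset.range n, e (scE (scExt n w k)) * 3^(n-1-k))
        = ∑ j ∈ Finset.range n, e (scE (scExt n w (n-1-j))) * 3^j := by
    intro w e
    rw [← Finset.sum_range_reflect (fun j => e (scE (scExt n w (n-1-j))) * 3^j) n]
    refine Finset.sum_congr rfl fun k hk => ?_
    have hk' := Finset.mem_range.1 hk
    have hkk : n-1-(n-1-k) = k := by omega
    rw [hkk]
  have hb : ∀ (w : Fin n → ℤ) (e : ℤ × ℤ → ℤ), (∀ p, 0 ≤ e p ∧ e p < 3) →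
      ∀ k, 0 ≤ e (scE (scExt n w (n-1-k))) ∧ e (scE (scExt n w (n-1-k))) < 3 :=
    fun w e he k => he _
  have he1 : ∀ p : ℤ × ℤ, 0 ≤ (p.1) ∧ (p.1) < 3 → True := fun _ _ => trivial
  -- apply base3_unique to coordinate 1
  have hq1 : ∀ j < n, (scE (scExt n w₁ (n-1-j))).1 = (scE (scExt n w₂ (n-1-j))).1 := by
    refine base3_unique n _ _ ?_ ?_ ?_
    · intro k
      have := (scE_bounds (scExt n w₁ (n-1-k))).1
      simp only [Set.mem_Icc] at this; omega
    · intro k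
      have := (scE_bounds (scExt n w₂ (n-1-k))).1
      simp only [Set.mem_Icc] at this; omega
    · rw [← key w₁ Prod.fst, ← key w₂ Prod.fst]
      exact hN1
  have hq2 : ∀ j < n, (scE (scExt n w₁ (n-1-j))).2 = (scE (scExt n w₂ (n-1-j))).2 := by
    refine base3_unique n _ _ ?_ ?_ ?_
    · intro k
      have := (scE_bounds (scExt n w₁ (n-1-k))).2
      simp only [Set.mem_Icc] at this; omega
    · intro k
      have := (scE_bounds (scExt n w₂ (n-1-k))).2
      simp only [Set.mem_Icc] at this; omega
    · rw [← key w₁ Prod.snd, ← key w₂ Prod.snd]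
      exact hN2
  funext k
  have hkn : (k:ℕ) < n := k.2
  have hj : n-1-(n-1-(k:ℕ)) = (k:ℕ) := by omega
  have hjn : n-1-(k:ℕ) < n := by omega
  have e1 := hq1 (n-1-(k:ℕ)) hjn
  have e2 := hq2 (n-1-(k:ℕ)) hjn
  rw [hj] at e1 e2
  have hsc : scE (scExt n w₁ (k:ℕ)) = scE (scExt n w₂ (k:ℕ)) := Prod.ext e1 e2
  have hw1 : scExt n w₁ (k:ℕ) = w₁ k := by simp [scExt, hkn]
  have hw2 : scExt n w₂ (k:ℕ) = w₂ k := by simp [scExt, hkn]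
  rw [hw1, hw2] at hsc
  have b1 := Finset.mem_Icc.1 (h₁ k); have b2 := Finset.mem_Icc.1 (h₂ k)
  exact scE_inj b1.1 (by omega) b2.1 (by omega) hsc

end D

section E
open MeasureTheory Filter Set Finset Topology

/-- Lebesgue measure restricted to `[0,1)` -/
def scNu : Measure ℝ := volume.restrict (Set.Ico (0:ℝ) 1)

/-- the natural self-similar measure on the carpet -/
def scMu : Measure (ℝ × ℝ) := Measure.map scG scNu

lemma scMain (n : ℕ) (t : Set (ℝ × ℝ)) (ht : MeasurableSet t)
    (hd : ∀ p ∈ t, ∀ q ∈ t, dist p q ≤ (1/3:ℝ)^n) :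
    scMu t ≤ 16 * ENNReal.ofReal ((1/8:ℝ)^n) := by
  classical
  rcases t.eq_empty_or_nonempty with rfl | ⟨x₀, hx₀⟩
  · simp [scMu]
  set W : Finset (Fin n → ℤ) := (Fintype.piFinset fun _ => Finset.Icc (0:ℤ) 7).filter
      (fun w => (scCell n w ∩ t).Nonempty) with hW
  have hmap : scMu t = volume (scG ⁻¹' t ∩ Set.Ico (0:ℝ) 1) := by
    rw [scMu, Measure.map_apply scG_measurable ht, scNu,
      Measure.restrict_apply (scG_measurable ht)]
  have hsub : scG ⁻¹' t ∩ Set.Ico (0:ℝ) 1 ⊆ ⋃ w ∈ W, scI n w := by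
    rintro x ⟨hxt, hx01⟩
    have hw : scWord n x ∈ W := by
      rw [hW, Finset.mem_filter]
      refine ⟨?_, ⟨scG x, scG_mem_cell n x, hxt⟩⟩
      rw [Fintype.mem_piFinset]
      intro k
      rw [Finset.mem_Icc]
      exact Set.mem_Icc.1 (scDig_mem k x)
    exact Set.mem_biUnion hw (scMem_I hx01 n)
  have hIvol : ∀ w : Fin n → ℤ, volume (scI n w) ≤ ENNReal.ofReal ((1/8:ℝ)^n) := by
    intro w
    rw [scI, Real.volume_Ico, add_sub_cancel_left]
  have hcard : W.card ≤ 16 := by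
    set u := (3:ℝ)^n * x₀.1 with hu
    set v := (3:ℝ)^n * x₀.2 with hv
    have h3n : (0:ℝ) < 3^n := by positivity
    have key : ∀ w ∈ W, (scN1 n w ∈ Finset.Icc (⌈u⌉-2) (⌊u⌋+1)) ∧
        (scN2 n w ∈ Finset.Icc (⌈v⌉-2) (⌊v⌋+1)) := by
      intro w hwW
      rw [hW, Finset.mem_filter] at hwW
      obtain ⟨y, hycell, hyt⟩ := hwW.2
      have hdist : dist y x₀ ≤ (1/3:ℝ)^n := hd y hyt x₀ hx₀
      have hd1 : |y.1 - x₀.1| ≤ (1/3:ℝ)^n := by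
        rw [← Real.dist_eq]
        exact le_trans (by rw [Prod.dist_eq]; exact le_max_left _ _) hdist
      have hd2 : |y.2 - x₀.2| ≤ (1/3:ℝ)^n := by
        rw [← Real.dist_eq]
        exact le_trans (by rw [Prod.dist_eq]; exact le_max_right _ _) hdist
      obtain ⟨⟨hc1, hc2⟩, hc3, hc4⟩ := hycell
      rw [abs_sub_le_iff] at hd1 hd2
      have h13 : (1/3:ℝ)^n * 3^n = 1 := by
        rw [div_pow, one_pow]
        field_simp
      constructor
      · rw [Finset.mem_Icc]
        constructor
        · have : u ≤ (scN1 n w : ℝ) + 2 := by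
            rw [scN1_cast, hu]
            have : scB1 n w ≥ x₀.1 - 2 * (1/3)^n := by linarith
            nlinarith
          have := Int.ceil_le.2 (by exact_mod_cast this)
          omega
        · have : (scN1 n w : ℝ) ≤ u + 1 := by
            rw [scN1_cast, hu]
            have : scB1 n w ≤ x₀.1 + (1/3)^n := by linarith
            nlinarith
          have h' : (scN1 n w : ℝ) - 1 ≤ u := by linarith
          have := Int.le_floor.2 (by exact_mod_cast h' : ((scN1 n w - 1 : ℤ) : ℝ) ≤ u)
          omega
      · rw [Finset.mem_Icc]
        constructor
        · have : v ≤ (scN2 n w : ℝ) + 2 := by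
            rw [scN2_cast, hv]
            have : scB2 n w ≥ x₀.2 - 2 * (1/3)^n := by linarith
            nlinarith
          have := Int.ceil_le.2 (by exact_mod_cast this)
          omega
        · have : (scN2 n w : ℝ) ≤ v + 1 := by
            rw [scN2_cast, hv]
            have : scB2 n w ≤ x₀.2 + (1/3)^n := by linarith
            nlinarith
          have h' : (scN2 n w : ℝ) - 1 ≤ v := by linarith
          have := Int.le_floor.2 (by exact_mod_cast h' : ((scN2 n w - 1 : ℤ) : ℝ) ≤ v)
          omega
    have hinj : Set.InjOn (fun w => (scN1 n w, scN2 n w)) ↑W := by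
      intro w₁ hw₁ w₂ hw₂ heq
      rw [Finset.mem_coe, hW, Finset.mem_filter, Fintype.mem_piFinset] at hw₁ hw₂
      simp only [Prod.mk.injEq] at heq
      exact scN_inj (fun k => hw₁.1 k) (fun k => hw₂.1 k) heq.1 heq.2
    have hmaps : ∀ w ∈ W, (fun w => (scN1 n w, scN2 n w)) w ∈
        Finset.Icc (⌈u⌉-2) (⌊u⌋+1) ×ˢ Finset.Icc (⌈v⌉-2) (⌊v⌋+1) := by
      intro w hw
      rw [Finset.mem_product]
      exact key w hw
    refine le_trans (Finset.card_le_card_of_injOn _ hmaps hinj) ?_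
    rw [Finset.card_product]
    have c1 : (Finset.Icc (⌈u⌉-2) (⌊u⌋+1)).card ≤ 4 := by
      rw [Int.card_Icc]
      have := Int.floor_le_ceil u
      omega
    have c2 : (Finset.Icc (⌈v⌉-2) (⌊v⌋+1)).card ≤ 4 := by
      rw [Int.card_Icc]
      have := Int.floor_le_ceil v
      omega
    calc _ ≤ 4 * 4 := Nat.mul_le_mul c1 c2
      _ = 16 := rfl
  calc scMu t = volume (scG ⁻¹' t ∩ Set.Ico (0:ℝ) 1) := hmap
    _ ≤ volume (⋃ w ∈ W, scI n w) := measure_mono hsub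
    _ ≤ ∑ w ∈ W, volume (scI n w) := measure_biUnion_finset_le W _
    _ ≤ ∑ _w ∈ W, ENNReal.ofReal ((1/8:ℝ)^n) := Finset.sum_le_sum fun w _ => hIvol w
    _ = W.card * ENNReal.ofReal ((1/8:ℝ)^n) := by rw [Finset.sum_const, nsmul_eq_mul]
    _ ≤ 16 * ENNReal.ofReal ((1/8:ℝ)^n) := by
        gcongr
        exact_mod_cast hcard
end E

section F
open MeasureTheory Filter Set Finset Topology ENNReal NNReal

/-- the carpet dimension -/
def scd : ℝ := Real.logb 3 8

lemma scd_pos : 0 < scd := Real.logb_pos (by norm_num) (by norm_num)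

lemma sc3d : (3:ℝ)^scd = 8 := Real.rpow_logb (by norm_num) (by norm_num) (by norm_num)

lemma sc13d (n : ℕ) : ((1/8:ℝ))^n = (((1/3:ℝ))^n)^scd := by
  have h13 : ((1/3:ℝ))^scd = 1/8 := by
    rw [one_div, one_div, Real.inv_rpow (by norm_num), sc3d]
  rw [← Real.rpow_natCast ((1/3:ℝ)) n, ← Real.rpow_mul (by norm_num), mul_comm,
    Real.rpow_mul (by norm_num), h13, Real.rpow_natCast]

lemma scBound (s : Set (ℝ × ℝ)) (n : ℕ)
    (h : EMetric.diam s ≤ ENNReal.ofReal ((1/3:ℝ)^n)) :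
    scMu s ≤ 16 * ENNReal.ofReal ((1/8:ℝ)^n) := by
  refine le_trans (measure_mono subset_closure) (scMain n (closure s) measurableSet_closure ?_)
  intro p hp q hq
  have he : edist p q ≤ ENNReal.ofReal ((1/3:ℝ)^n) := by
    refine le_trans (EMetric.edist_le_diam_of_mem hp hq) ?_
    rwa [EMetric.diam_closure]
  rw [edist_dist] at he
  rw [← ENNReal.ofReal_le_ofReal_iff (by positivity)]
  exact he

lemma scFrostman (s : Set (ℝ × ℝ)) (hs : EMetric.diam s ≤ 1) :
    scMu s ≤ 128 * EMetric.diam s ^ scd := by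
  have h16 : ENNReal.ofReal (16:ℝ) = 16 := by norm_num
  have h128 : ENNReal.ofReal (128:ℝ) = 128 := by norm_num
  set D := (EMetric.diam s).toReal with hD
  have hfin : EMetric.diam s ≠ ⊤ := (hs.trans_lt (by norm_num)).ne
  have hDeq : EMetric.diam s = ENNReal.ofReal D := (ENNReal.ofReal_toReal hfin).symm
  have hD0 : 0 ≤ D := ENNReal.toReal_nonneg
  have hD1 : D ≤ 1 := by
    rw [hD]
    calc (EMetric.diam s).toReal ≤ (1:ℝ≥0∞).toReal := ENNReal.toReal_mono (by norm_num) hs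
      _ = 1 := by simp
  rcases eq_or_lt_of_le hD0 with hDz | hDpos
  · have hball : ∀ n : ℕ, scMu s ≤ ENNReal.ofReal (16 * (1/8:ℝ)^n) := by
      intro n
      rw [ENNReal.ofReal_mul (by norm_num), h16]
      refine scBound s n ?_
      rw [hDeq, ← hDz]
      simp
    have htend : Tendsto (fun n : ℕ => ENNReal.ofReal (16 * (1/8:ℝ)^n)) atTop
        (𝓝 (ENNReal.ofReal 0)) := by
      refine ENNReal.tendsto_ofReal ?_
      have := tendsto_pow_atTop_nhds_zero_of_lt_one (by norm_num : (0:ℝ) ≤ 1/8) (by norm_num)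
      simpa using this.const_mul (16:ℝ)
    have h0 : scMu s ≤ ENNReal.ofReal 0 := ge_of_tendsto' htend hball
    simp only [ENNReal.ofReal_zero, nonpos_iff_eq_zero] at h0
    rw [h0]
    exact zero_le
  · set n := Nat.floor (Real.logb 3 D⁻¹) with hn
    have hDinv1 : 1 ≤ D⁻¹ := (one_le_inv₀ hDpos).2 hD1
    have hlog0 : 0 ≤ Real.logb 3 D⁻¹ := Real.logb_nonneg (by norm_num) hDinv1
    have hn1 : (n:ℝ) ≤ Real.logb 3 D⁻¹ := Nat.floor_le hlog0
    have hn2 : Real.logb 3 D⁻¹ < (n:ℝ)+1 := Nat.lt_floor_add_one _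
    have h3 : (3:ℝ)^(n:ℕ) ≤ D⁻¹ := by
      rw [← Real.rpow_natCast (3:ℝ) n]
      calc (3:ℝ)^(n:ℝ) ≤ 3^(Real.logb 3 D⁻¹) :=
            Real.rpow_le_rpow_of_exponent_le (by norm_num) hn1
        _ = D⁻¹ := Real.rpow_logb (by norm_num) (by norm_num) (inv_pos.2 hDpos)
    have h4 : D⁻¹ < (3:ℝ)^(n+1:ℕ) := by
      rw [← Real.rpow_natCast (3:ℝ) (n+1)]
      calc D⁻¹ = 3^(Real.logb 3 D⁻¹) :=
            (Real.rpow_logb (by norm_num) (by norm_num) (inv_pos.2 hDpos)).symm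
        _ < 3^((n:ℝ)+1) := Real.rpow_lt_rpow_of_exponent_lt (by norm_num) (by push_cast; linarith)
        _ = 3^(((n+1:ℕ)):ℝ) := by push_cast; ring_nf
    have hDle : D ≤ (1/3:ℝ)^n := by
      rw [div_pow, one_pow]
      rw [le_div_iff₀ (by positivity)]
      have h3p : (0:ℝ) < 3^n := by positivity
      calc D * 3^n ≤ D * D⁻¹ := by
            have := mul_le_mul_of_nonneg_left h3 hD0
            linarith
        _ = 1 := by field_simp
    have hDgt : (1/3:ℝ)^(n+1) < D := by
      rw [div_pow, one_pow, div_lt_iff₀ (by positivity)]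
      have h3p : (0:ℝ) < 3^(n+1) := by positivity
      have := mul_lt_mul_of_pos_left h4 hDpos
      rw [mul_inv_cancel₀ (ne_of_gt hDpos)] at this
      linarith
    have hb := scBound s n (by rw [hDeq]; exact ENNReal.ofReal_le_ofReal hDle)
    have hcmp : (16:ℝ) * (1/8)^n ≤ 128 * D^scd := by
      have hkey : ((1/3:ℝ)^(n+1))^scd ≤ D^scd :=
        Real.rpow_le_rpow (by positivity) hDgt.le scd_pos.le
      rw [← sc13d (n+1)] at hkey
      have h8 : ((1/8:ℝ))^(n+1) = (1/8) * (1/8)^n := by ring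
      rw [h8] at hkey
      linarith
    calc scMu s ≤ 16 * ENNReal.ofReal ((1/8:ℝ)^n) := hb
      _ = ENNReal.ofReal (16 * (1/8:ℝ)^n) := by
          rw [ENNReal.ofReal_mul (by norm_num), h16]
      _ ≤ ENNReal.ofReal (128 * D^scd) := ENNReal.ofReal_le_ofReal hcmp
      _ = 128 * ENNReal.ofReal (D^scd) := by
          rw [ENNReal.ofReal_mul (by norm_num), h128]
      _ = 128 * (ENNReal.ofReal D)^scd := by rw [ENNReal.ofReal_rpow_of_pos hDpos]
      _ = 128 * EMetric.diam s ^ scd := by rw [← hDeq]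

lemma scG_mem_K {K : Set (ℝ × ℝ)} (hne : K.Nonempty) (hK : IsCompact K)
    (hself : K = ⋃ v ∈ carpetOffsets, (fun x : ℝ × ℝ => (3 : ℝ)⁻¹ • x + v) '' K)
    (x : ℝ) : scG x ∈ K := by
  set v : ℕ → ℝ × ℝ := fun k => (((scE (scDig k x)).1 : ℝ)/3, ((scE (scDig k x)).2 : ℝ)/3)
    with hv
  have hvmem : ∀ k, v k ∈ carpetOffsets := by
    intro k
    have hm := Set.mem_Icc.1 (scDig_mem k x)
    exact scE_offset hm.1 (by omega)
  refine scMemAttractor hne hK hself v hvmem ?_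
  have h1 : HasSum (fun k => scA1 k x / 3^(k+1)) (scG x).1 :=
    (scSummable (fun k => scA1_mem k x)).hasSum
  have h2 : HasSum (fun k => scA2 k x / 3^(k+1)) (scG x).2 :=
    (scSummable (fun k => scA2_mem k x)).hasSum
  have heq : (fun k => ((3:ℝ)⁻¹)^k • v k)
      = fun k => (scA1 k x / 3^(k+1), scA2 k x / 3^(k+1)) := by
    funext k
    rw [hv]
    simp only [Prod.smul_mk, smul_eq_mul, Prod.mk.injEq, scA1, scA2]
    constructor <;> (rw [pow_succ]; field_simp; rw [one_div, inv_pow]; field_simp)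
  rw [heq]
  exact (h1.prodMk h2)

lemma scMu_K {K : Set (ℝ × ℝ)} (hne : K.Nonempty) (hK : IsCompact K)
    (hself : K = ⋃ v ∈ carpetOffsets, (fun x : ℝ × ℝ => (3 : ℝ)⁻¹ • x + v) '' K) :
    scMu K = 1 := by
  rw [scMu, Measure.map_apply scG_measurable hK.measurableSet]
  have : scG ⁻¹' K = Set.univ := by
    ext x
    simp [scG_mem_K hne hK hself x]
  rw [this, scNu]
  simp

end F

section G
open MeasureTheory Filter Set Finset Topology ENNReal NNReal

/-- the 8 offsets as a function on `Fin 8` -/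
def scO : Fin 8 → ℝ × ℝ := fun i => ((((scE i).1 : ℝ))/3, (((scE i).2 : ℝ))/3)

lemma scO_range : carpetOffsets = Set.range scO := carpetOffsets_eq_range

lemma scCover {K : Set (ℝ × ℝ)}
    (hself : K = ⋃ v ∈ carpetOffsets, (fun x : ℝ × ℝ => (3 : ℝ)⁻¹ • x + v) '' K) :
    ∀ (n : ℕ), ∀ x ∈ K, ∃ w : Fin n → Fin 8,
      x ∈ (fun z => (∑ k : Fin n, ((3:ℝ)⁻¹)^(k:ℕ) • scO (w k)) + ((3:ℝ)⁻¹)^n • z) '' K := by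
  intro n
  induction n with
  | zero =>
    intro x hx
    exact ⟨fun k => k.elim0, ⟨x, hx, by simp⟩⟩
  | succ n ih =>
    intro x hx
    rw [hself] at hx
    rw [Set.mem_iUnion₂] at hx
    obtain ⟨v, hv, y, hy, hxy⟩ := hx
    rw [scO_range] at hv
    obtain ⟨i, rfl⟩ := hv
    obtain ⟨w, z, hz, hwy⟩ := ih y hy
    refine ⟨Fin.cons i w, z, hz, ?_⟩
    simp only at hwy hxy ⊢
    rw [← hxy, ← hwy]
    rw [Fin.sum_univ_succ]
    simp only [Fin.cons_zero, Fin.cons_succ, Fin.val_zero, Fin.val_succ, pow_zero, one_smul,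
      smul_add, Finset.smul_sum, smul_smul]
    have e1 : ∀ k : Fin n, ((3:ℝ)⁻¹ * (3:ℝ)⁻¹^(k:ℕ)) • scO (w k)
        = (3:ℝ)⁻¹^((k:ℕ)+1) • scO (w k) := fun k => by
      rw [pow_succ]; congr 1; ring
    rw [Finset.sum_congr rfl (fun k _ => e1 k)]
    have e2 : (3:ℝ)⁻¹ * (3:ℝ)⁻¹^n = (3:ℝ)⁻¹^(n+1) := by rw [pow_succ]; ring
    rw [e2]
    abel

lemma scPiece_diam (K : Set (ℝ × ℝ)) (n : ℕ) (B : ℝ × ℝ) :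
    EMetric.diam ((fun z => B + ((3:ℝ)⁻¹)^n • z) '' K)
      ≤ ((3:ℝ≥0∞)⁻¹)^n * EMetric.diam K := by
  have hn : ‖((3:ℝ)⁻¹)^n‖₊ = ((3:ℝ≥0)⁻¹)^n := by
    rw [nnnorm_pow, nnnorm_inv]
    norm_num
  have hl : LipschitzWith (((3:ℝ≥0)⁻¹)^n) (fun z : ℝ × ℝ => B + ((3:ℝ)⁻¹)^n • z) := by
    intro x y
    simp only
    rw [edist_add_left, edist_smul₀, hn, ENNReal.smul_def, smul_eq_mul]
  refine le_trans (hl.ediam_image_le K) ?_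
  gcongr
  rw [ENNReal.coe_pow, ENNReal.coe_inv (by norm_num)]
  norm_num
  exact le_rfl

lemma sc3d_top : (3:ℝ≥0∞)^scd = 8 := by
  have h3 : (3:ℝ≥0∞) = ENNReal.ofReal 3 := by norm_num
  rw [h3, ENNReal.ofReal_rpow_of_pos (by norm_num), sc3d]
  norm_num

lemma scUpper {K : Set (ℝ × ℝ)} (hK : IsCompact K)
    (hself : K = ⋃ v ∈ carpetOffsets, (fun x : ℝ × ℝ => (3 : ℝ)⁻¹ • x + v) '' K) :
    μH[scd] K ≤ EMetric.diam K ^ scd := by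
  set D := EMetric.diam K with hD
  have hDne : D ≠ ⊤ := hK.isBounded.ediam_ne_top
  set t : ∀ n : ℕ, (Fin n → Fin 8) → Set (ℝ × ℝ) := fun n w =>
    (fun z => (∑ k : Fin n, ((3:ℝ)⁻¹)^(k:ℕ) • scO (w k)) + ((3:ℝ)⁻¹)^n • z) '' K with ht
  have hr : Tendsto (fun n : ℕ => ((3:ℝ≥0∞)⁻¹)^n * D) atTop (𝓝 0) := by
    have h1 : Tendsto (fun n : ℕ => ((3:ℝ≥0∞)⁻¹)^n) atTop (𝓝 0) :=
      ENNReal.tendsto_pow_atTop_nhds_zero_of_lt_one (by norm_num)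
    have := ENNReal.Tendsto.mul_const h1 (Or.inr hDne)
    simpa using this
  have hdiam : ∀ (n : ℕ) (w : Fin n → Fin 8), EMetric.diam (t n w) ≤ ((3:ℝ≥0∞)⁻¹)^n * D :=
    fun n w => scPiece_diam K n _
  have hcov : ∀ n : ℕ, K ⊆ ⋃ w : Fin n → Fin 8, t n w := by
    intro n x hx
    obtain ⟨w, hw⟩ := scCover hself n x hx
    exact Set.mem_iUnion.2 ⟨w, hw⟩
  have hle := Measure.hausdorffMeasure_le_liminf_sum scd K (fun n => ((3:ℝ≥0∞)⁻¹)^n * D)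
    hr t (Filter.Eventually.of_forall fun n => hdiam n) (Filter.Eventually.of_forall hcov)
  refine le_trans hle ?_
  have hterm : ∀ n : ℕ, (∑ w : Fin n → Fin 8, EMetric.diam (t n w) ^ scd) ≤ D ^ scd := by
    intro n
    have hb : ∀ w : Fin n → Fin 8, EMetric.diam (t n w) ^ scd ≤ (((3:ℝ≥0∞)⁻¹)^n * D) ^ scd :=
      fun w => ENNReal.rpow_le_rpow (hdiam n w) scd_pos.le
    calc (∑ w : Fin n → Fin 8, EMetric.diam (t n w) ^ scd)
        ≤ (Finset.univ : Finset (Fin n → Fin 8)).card • ((((3:ℝ≥0∞)⁻¹)^n * D) ^ scd) :=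
          Finset.sum_le_card_nsmul _ _ _ (fun w _ => hb w)
      _ = (8:ℝ≥0∞)^n * ((((3:ℝ≥0∞)⁻¹)^n * D) ^ scd) := by
          rw [Finset.card_univ, nsmul_eq_mul]
          congr 1
          simp
      _ = D ^ scd := by
          rw [ENNReal.mul_rpow_of_nonneg _ _ scd_pos.le, ← ENNReal.inv_pow,
            ENNReal.inv_rpow, ← mul_assoc]
          have h38 : ((3:ℝ≥0∞)^n) ^ scd = (8:ℝ≥0∞)^n := by
            rw [← ENNReal.rpow_natCast (3:ℝ≥0∞) n, ← ENNReal.rpow_mul, mul_comm,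
              ENNReal.rpow_mul, sc3d_top, ENNReal.rpow_natCast]
          rw [h38, ENNReal.mul_inv_cancel (by positivity) (by simp), one_mul]
  calc Filter.liminf (fun n => ∑ w : Fin n → Fin 8, EMetric.diam (t n w) ^ scd) atTop
      ≤ Filter.liminf (fun _ : ℕ => D ^ scd) atTop :=
        Filter.liminf_le_liminf (Filter.Eventually.of_forall hterm)
    _ = D ^ scd := Filter.liminf_const _

end G


end

/-- The Hausdorff dimension of the Sierpinski carpet — the nonempty compact attractor of
the IFS of the 8 similarities `x ↦ x/3 + v`, `v ∈ carpetOffsets` — is `log 8 / log 3`. -/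
theorem sierpinski_carpet_dimH (K : Set (ℝ × ℝ)) (hne : K.Nonempty) (hK : IsCompact K)
    (hself : K = ⋃ v ∈ carpetOffsets, (fun x : ℝ × ℝ => (3 : ℝ)⁻¹ • x + v) '' K) :
    dimH K = ENNReal.ofReal (Real.log 8 / Real.log 3) := by
  have hcoe := ENNReal.ofReal_eq_coe_nnreal
    (show (0:ℝ) ≤ Real.log 8 / Real.log 3 from scd_pos.le)
  rw [hcoe]
  refine le_antisymm ?_ ?_
  · refine dimH_le_of_hausdorffMeasure_ne_top ?_
    show MeasureTheory.Measure.hausdorffMeasure scd K ≠ ⊤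
    exact (lt_of_le_of_lt (scUpper hK hself)
      (ENNReal.rpow_lt_top_of_nonneg scd_pos.le hK.isBounded.ediam_ne_top)).ne
  · refine le_dimH_of_hausdorffMeasure_ne_zero ?_
    show MeasureTheory.Measure.hausdorffMeasure scd K ≠ 0
    have hFr : ∀ s : Set (ℝ × ℝ), EMetric.diam s ≤ 1 →
        ((128:ENNReal)⁻¹ • scMu) s ≤ EMetric.diam s ^ scd := by
      intro s hs
      rw [MeasureTheory.Measure.smul_apply, smul_eq_mul]
      calc (128:ENNReal)⁻¹ * scMu s ≤ (128:ENNReal)⁻¹ * (128 * EMetric.diam s ^ scd) := by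
            gcongr
            exact scFrostman s hs
        _ = EMetric.diam s ^ scd := by
            rw [← mul_assoc, ENNReal.inv_mul_cancel (by norm_num) (by norm_num), one_mul]
    have hle := MeasureTheory.Measure.le_iff'.1
      (MeasureTheory.Measure.le_hausdorffMeasure scd _ 1 one_pos hFr) K
    rw [MeasureTheory.Measure.smul_apply, smul_eq_mul, scMu_K hne hK hself, mul_one] at hle
    have hpos : (0:ENNReal) < (128:ENNReal)⁻¹ := ENNReal.inv_pos.2 (by norm_num)
    exact (lt_of_lt_of_le hpos hle).ne'
end

section
/- There exists a continuous surjection from the unit interval [0,1] onto the unit square [0,1]². -/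
/-!
The Cantor set `C ⊆ [0,1]` is homeomorphic to the Cantor space `ℕ → Bool`, which maps
continuously onto every nonempty compact metric space (Hausdorff–Alexandroff). Since `[0,1]²`
is an absolute extensor, a continuous surjection `C → [0,1]²` extends (Tietze) to `[0,1]`.
-/

open Function Topology

noncomputable def cantorSpaceToUnitInterval (x : ℕ → Bool) : unitInterval :=
  ⟨cantorSetHomeomorphNatToBool.symm x,
    cantorSet_subset_unitInterval (cantorSetHomeomorphNatToBool.symm x).2⟩

theorem isClosedEmbedding_cantorSpaceToUnitInterval :
    IsClosedEmbedding cantorSpaceToUnitInterval := by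
  refine Continuous.isClosedEmbedding ?_ fun x y hxy => ?_
  · exact (continuous_subtype_val.comp cantorSetHomeomorphNatToBool.symm.continuous).subtype_mk _
  · exact cantorSetHomeomorphNatToBool.symm.injective (Subtype.ext congr(($hxy : ℝ)))

theorem exists_continuous_surjective_unitInterval_of_compact (X : Type*) [MetricSpace X]
    [CompactSpace X] [Nonempty X] [TietzeExtension.{0} X] :
    ∃ f : unitInterval → X, Continuous f ∧ Surjective f := by
  obtain ⟨g, hg_cont, hg_surj⟩ := exists_nat_bool_continuous_surjective_of_compact X
  obtain ⟨f, hf⟩ := ContinuousMap.exists_extension' isClosedEmbedding_cantorSpaceToUnitInterval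
    ⟨g, hg_cont⟩
  refine ⟨f, f.continuous, fun y => ?_⟩
  obtain ⟨x, rfl⟩ := hg_surj y
  exact ⟨cantorSpaceToUnitInterval x, congrFun hf x⟩

/-- There exists a continuous surjection from `[0,1]` onto `[0,1]²` (a space-filling curve). -/
theorem exists_space_filling_curve :
    ∃ f : Set.Icc (0 : ℝ) 1 → Set.Icc (0 : ℝ) 1 × Set.Icc (0 : ℝ) 1,
      Continuous f ∧ Function.Surjective f :=
  exists_continuous_surjective_unitInterval_of_compact (unitInterval × unitInterval)
end
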